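/- arXiv:0708.1677 — 3 statements merged into one kernel-verified Lean document; each statement's English description precedes it below -/
import Mathlib

section
/- Let C be a whiskered groupoid and a: x → y, b: u → v, c: z → w. With [a,b] = (a.v)⁻¹(x.b)⁻¹(a.u)(y.b), the following identity holds in C(yvw, yvw): (([a,b].z)^{yv.c}) · ([a, v.c]) · ((x.[b,c])^{a.vw}) = (y.[b,c]) · (([a, u.c])^{y.b.w}) · ([a,b].w), where g^h = h⁻¹gh. -/
open CategoryTheory

universe v u

/-- A whiskering on a category `C`: a monoid structure on the objects together with
left (`lw`) and right (`rw'`) actions of the objects on the morphisms, satisfying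
the whiskering axioms. -/
structure WhiskerStruct (C : Type u) [Category.{v} C] [Monoid C] where
  lw : ∀ (x : C) {u v : C}, (u ⟶ v) → ((x * u) ⟶ (x * v))
  rw' : ∀ (x : C) {u v : C}, (u ⟶ v) → ((u * x) ⟶ (v * x))
  lw_one : ∀ {u v : C} (a : u ⟶ v),
    lw 1 a = eqToHom (one_mul u) ≫ a ≫ eqToHom (one_mul v).symm
  lw_mul : ∀ (x y : C) {u v : C} (a : u ⟶ v),
    lw (x * y) a = eqToHom (mul_assoc x y u) ≫ lw x (lw y a) ≫ eqToHom (mul_assoc x y v).symm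
  lw_comp : ∀ (x : C) {u v w : C} (a : u ⟶ v) (b : v ⟶ w),
    lw x (a ≫ b) = lw x a ≫ lw x b
  lw_id : ∀ (x u : C), lw x (𝟙 u) = 𝟙 (x * u)
  rw_one : ∀ {u v : C} (a : u ⟶ v),
    rw' 1 a = eqToHom (mul_one u) ≫ a ≫ eqToHom (mul_one v).symm
  rw_mul : ∀ (x y : C) {u v : C} (a : u ⟶ v),
    rw' (x * y) a = eqToHom (mul_assoc u x y).symm ≫ rw' y (rw' x a) ≫ eqToHom (mul_assoc v x y)
  rw_comp : ∀ (x : C) {u v w : C} (a : u ⟶ v) (b : v ⟶ w),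
    rw' x (a ≫ b) = rw' x a ≫ rw' x b
  rw_id : ∀ (x u : C), rw' x (𝟙 u) = 𝟙 (u * x)
  lw_rw : ∀ (x y : C) {u v : C} (a : u ⟶ v),
    lw x (rw' y a) = eqToHom (mul_assoc x u y).symm ≫ rw' y (lw x a) ≫ eqToHom (mul_assoc x v y)

/-- The commutator `[a,b] = (a.v)⁻¹ ≫ (x.b)⁻¹ ≫ (a.u) ≫ (y.b)` of `a : x ⟶ y` and
`b : u ⟶ v` in a whiskered groupoid (composition written left to right, i.e. `≫`). -/
def WhiskerStruct.comm {C : Type u} [Groupoid.{v} C] [Monoid C] (W : WhiskerStruct C)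
    {x y u v : C} (a : x ⟶ y) (b : u ⟶ v) : (y * v) ⟶ (y * v) :=
  Groupoid.inv (W.rw' v a) ≫ Groupoid.inv (W.lw x b) ≫ W.rw' u a ≫ W.lw y b

section Aux
variable {C : Type u} [Groupoid.{v} C] [Monoid C] (W : WhiskerStruct C)

lemma WhiskerStruct.rw_inv (x : C) {u v : C} (f : u ⟶ v) :
    W.rw' x (Groupoid.inv f) = Groupoid.inv (W.rw' x f) := by
  simp only [Groupoid.inv_eq_inv]
  apply IsIso.eq_inv_of_hom_inv_id
  rw [← W.rw_comp, IsIso.hom_inv_id, W.rw_id]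

lemma WhiskerStruct.lw_inv (x : C) {u v : C} (f : u ⟶ v) :
    W.lw x (Groupoid.inv f) = Groupoid.inv (W.lw x f) := by
  simp only [Groupoid.inv_eq_inv]
  apply IsIso.eq_inv_of_hom_inv_id
  rw [← W.lw_comp, IsIso.hom_inv_id, W.lw_id]

lemma WhiskerStruct.rw_inv' (x : C) {u v : C} (f : u ⟶ v) :
    W.rw' x (inv f) = inv (W.rw' x f) := by
  rw [← Groupoid.inv_eq_inv f, ← Groupoid.inv_eq_inv (W.rw' x f), W.rw_inv]

lemma WhiskerStruct.lw_inv' (x : C) {u v : C} (f : u ⟶ v) :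
    W.lw x (inv f) = inv (W.lw x f) := by
  rw [← Groupoid.inv_eq_inv f, ← Groupoid.inv_eq_inv (W.lw x f), W.lw_inv]

lemma WhiskerStruct.lw_lw (x y : C) {u v : C} (a : u ⟶ v) :
    W.lw x (W.lw y a)
      = eqToHom (mul_assoc x y u).symm ≫ W.lw (x * y) a ≫ eqToHom (mul_assoc x y v) := by
  rw [W.lw_mul]; simp

end Aux

/-- The cube rule for commutators in a whiskered groupoid: for `a : x ⟶ y`,
`b : u ⟶ v`, `c : z ⟶ w`,
`([a,b].z)^{yv.c} · ([a, v.c]) · (x.[b,c])^{a.vw} = (y.[b,c]) · ([a, u.c])^{y.b.w} · ([a,b].w)`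
in `C(yvw, yvw)`, where `g^h = h⁻¹ ≫ g ≫ h`, products of loops are written in the
multiplicative (composition-of-loops) order `g · h = h ≫ g`, and the commutators
involving a re-bracketed object (`x.[b,c]`, `[a, v.c]`, ...) are transported to the
common object `(y*v)*w` by the canonical `eqToHom`s of associativity. -/
theorem comm_cube_rule {C : Type u} [Groupoid.{v} C] [Monoid C]
    (W : WhiskerStruct C) {x y u v z w : C} (a : x ⟶ y) (b : u ⟶ v) (c : z ⟶ w) :
    (Groupoid.inv (W.rw' w (W.rw' v a)) ≫
        (eqToHom (mul_assoc x v w) ≫ W.lw x (W.comm b c) ≫ eqToHom (mul_assoc x v w).symm) ≫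
        W.rw' w (W.rw' v a)) ≫
      (eqToHom (mul_assoc y v w) ≫ W.comm a (W.lw v c) ≫ eqToHom (mul_assoc y v w).symm) ≫
      (Groupoid.inv (W.lw (y * v) c) ≫ W.rw' z (W.comm a b) ≫ W.lw (y * v) c) =
    W.rw' w (W.comm a b) ≫
      (Groupoid.inv (W.rw' w (W.lw y b)) ≫
        (eqToHom (mul_assoc y u w) ≫ W.comm a (W.lw u c) ≫ eqToHom (mul_assoc y u w).symm) ≫
        W.rw' w (W.lw y b)) ≫
      (eqToHom (mul_assoc y v w) ≫ W.lw y (W.comm b c) ≫ eqToHom (mul_assoc y v w).symm) := by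
  set_option maxRecDepth 4000 in
  simp only [WhiskerStruct.comm, W.rw_comp, W.lw_comp, W.rw_inv, W.lw_inv, W.rw_inv', W.lw_inv',
    W.lw_rw, W.lw_lw, W.rw_mul, Groupoid.inv_eq_inv, IsIso.inv_comp, inv_eqToHom, Category.assoc,
    eqToHom_trans, eqToHom_refl, Category.id_comp, Category.comp_id,
    eqToHom_trans_assoc, IsIso.hom_inv_id_assoc, IsIso.inv_hom_id_assoc,
    IsIso.hom_inv_id, IsIso.inv_hom_id]
end

section
/- Let A be a whiskered R-category with bracket [a,b] = −(a.u)(y.b) + (x.b)(a.v) for a: x → y, b: u → v (composition left-to-right). Then for a: x → y, b: u → v, c: z → w, the Leibniz defect satisfies [[a,b], c] − [a, [b,c]] = Δ of the square with left edge [a, u.c], top edge x.b.z, bottom edge y.b.w, right edge [a, v.c]; explicitly [[a,b],c] − [a,[b,c]] = −[a, u.c]·(y.b.w) + (x.b.z)·[a, v.c]. -/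
open CategoryTheory

universe v u

/-- A whiskered `R`-category: an `R`-linear category with a whiskering whose left and
right actions are `R`-bilinear on hom-modules (`x.(ra + a') = r(x.a) + x.a'` and
`(ra + a').x = r(a.x) + a'.x`). -/
structure RWhiskerStruct (R : Type) [CommRing R] (C : Type u) [Category.{v} C]
    [Preadditive C] [CategoryTheory.Linear R C] [Monoid C] extends WhiskerStruct C where
  lw_add : ∀ (x : C) {u v : C} (a a' : u ⟶ v), lw x (a + a') = lw x a + lw x a'
  lw_smul : ∀ (x : C) {u v : C} (r : R) (a : u ⟶ v), lw x (r • a) = r • lw x a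
  rw_add : ∀ (x : C) {u v : C} (a a' : u ⟶ v), rw' x (a + a') = rw' x a + rw' x a'
  rw_smul : ∀ (x : C) {u v : C} (r : R) (a : u ⟶ v), rw' x (r • a) = r • rw' x a

/-- The bracket `[a,b] = −(a.u)(y.b) + (x.b)(a.v)` of `a : x ⟶ y`, `b : u ⟶ v` in a
whiskered `R`-category (composition written left to right). -/
def RWhiskerStruct.brk {R : Type} [CommRing R] {C : Type u} [Category.{v} C]
    [Preadditive C] [CategoryTheory.Linear R C] [Monoid C] (W : RWhiskerStruct R C)
    {x y u v : C} (a : x ⟶ y) (b : u ⟶ v) : (x * u) ⟶ (y * v) :=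
  -(W.rw' u a ≫ W.lw y b) + W.lw x b ≫ W.rw' v a


section Aux
variable {R : Type} [CommRing R] {C : Type u} [Category.{v} C]
    [Preadditive C] [CategoryTheory.Linear R C] [Monoid C] (W : RWhiskerStruct R C)

lemma RWhiskerStruct.lw_neg (x : C) {u v : C} (a : u ⟶ v) : W.lw x (-a) = -W.lw x a := by
  have := W.lw_smul x (-1 : R) a
  simpa using this

lemma RWhiskerStruct.rw_neg (x : C) {u v : C} (a : u ⟶ v) : W.rw' x (-a) = -W.rw' x a := by
  have := W.rw_smul x (-1 : R) a
  simpa using this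

end Aux


/-- The Leibniz defect in a whiskered `R`-category: for `a : x ⟶ y`, `b : u ⟶ v`,
`c : z ⟶ w`,
`[[a,b],c] − [a,[b,c]] = Δ⟨[a,u.c]; y.b.w, x.b.z; [a,v.c]⟩
  = −[a,u.c]·(y.b.w) + (x.b.z)·[a,v.c]`,
all terms transported to `(x*u)*z ⟶ (y*v)*w` along the canonical associativity
`eqToHom`s.  In particular the Leibniz identity generally fails. -/


theorem brk_leibniz_defect {R : Type} [CommRing R] {C : Type u} [Category.{v} C]
    [Preadditive C] [CategoryTheory.Linear R C] [Monoid C] (W : RWhiskerStruct R C)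
    {x y u v z w : C} (a : x ⟶ y) (b : u ⟶ v) (c : z ⟶ w) :
    W.brk (W.brk a b) c -
        eqToHom (mul_assoc x u z) ≫ W.brk a (W.brk b c) ≫ eqToHom (mul_assoc y v w).symm =
      -((eqToHom (mul_assoc x u z) ≫ W.brk a (W.lw u c) ≫ eqToHom (mul_assoc y u w).symm) ≫
          W.rw' w (W.lw y b)) +
        W.rw' z (W.lw x b) ≫
          (eqToHom (mul_assoc x v z) ≫ W.brk a (W.lw v c) ≫ eqToHom (mul_assoc y v w).symm) := by
  simp only [RWhiskerStruct.brk, W.lw_add, W.rw_add, W.lw_neg, W.rw_neg, W.lw_comp,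
    W.rw_comp, W.lw_mul, W.rw_mul, W.lw_rw, Preadditive.add_comp, Preadditive.comp_add,
    Preadditive.neg_comp, Preadditive.comp_neg, Category.assoc, eqToHom_trans,
    eqToHom_refl, Category.comp_id, Category.id_comp, eqToHom_trans_assoc]
  abel
end

section
/- Let M be a commutative monoid and C a whiskered groupoid over M in which x.a = a.x for all x ∈ C₀, a ∈ C₁. Then for all a: x → y and b: u → v, [a,b]·[b,a]^{σ} = 1, where σ is the canonical identification C(yv,yv) = C(vy,vy) (using yv = vy); i.e., [a,b] = [b,a]⁻¹, and [a,a] = 1 for all a. -/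
open CategoryTheory

universe v u

/-- If the monoid of objects of a whiskered groupoid is commutative and the left and
right actions agree (`x.a = a.x`, up to the canonical identifications `xu = ux`),
then `[a,b] = [b,a]⁻¹` (up to the canonical identification `yv = vy`) and
`[a,a] = 1` for all morphisms `a, b`. -/
theorem comm_antisymm_of_commutative {C : Type u} [Groupoid.{v} C] [Monoid C]
    (W : WhiskerStruct C)
    (hcomm : ∀ p q : C, p * q = q * p)
    (hact : ∀ (p : C) {u v : C} (a : u ⟶ v),
      W.lw p a = eqToHom (hcomm p u) ≫ W.rw' p a ≫ eqToHom (hcomm v p)) :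
    (∀ {x y u v : C} (a : x ⟶ y) (b : u ⟶ v),
      W.comm a b =
        eqToHom (hcomm y v) ≫ Groupoid.inv (W.comm b a) ≫ eqToHom (hcomm y v).symm) ∧
    (∀ {x y : C} (a : x ⟶ y), W.comm a a = 𝟙 (y * y)) := by
  constructor
  · intro x y u v a b
    simp only [WhiskerStruct.comm, hact, Groupoid.inv_eq_inv, IsIso.inv_comp, inv_eqToHom, IsIso.inv_inv,
      Category.assoc, eqToHom_trans, eqToHom_trans_assoc, eqToHom_refl, Category.id_comp,
      Category.comp_id]
  · intro x y a
    simp only [WhiskerStruct.comm, hact, Groupoid.inv_eq_inv, IsIso.inv_comp, inv_eqToHom,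
      Category.assoc, eqToHom_trans, eqToHom_trans_assoc, eqToHom_refl, Category.id_comp,
      Category.comp_id, IsIso.inv_hom_id, IsIso.inv_hom_id_assoc]
end
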